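/- arXiv:2405.01039 — 6 statements merged into one kernel-verified Lean document; each statement's English description precedes it below -/
import Mathlib

section
/- For any x in the bisubmodular polyhedron P₊(f), the tight family F(x) = {(X,Y) ∈ 3^N : x(X)−x(Y) = f(X,Y)} is closed under reduced union ⊔ and reduced intersection ⊓. -/
open Finset

/-! The map `(X, Y) ↦ x(X) - x(Y)` is modular with respect to `⊔` and `⊓`, while `f` is
bisubmodular. So for two tight pairs, `f(⊔) + f(⊓) ≤ f(X₁,Y₁) + f(X₂,Y₂) = x(⊔) + x(⊓)`, and
since `x ∈ P₊(f)` bounds each term on the right by the corresponding one on the left, both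
inequalities are equalities. -/

theorem Finset.sum_signed_sup_add_sum_signed_inf {ι M : Type*} [DecidableEq ι]
    [AddCommGroup M] (x : ι → M) (X₁ Y₁ X₂ Y₂ : Finset ι) :
    (∑ i ∈ (X₁ ∪ X₂) \ (Y₁ ∪ Y₂), x i - ∑ i ∈ (Y₁ ∪ Y₂) \ (X₁ ∪ X₂), x i)
        + (∑ i ∈ X₁ ∩ X₂, x i - ∑ i ∈ Y₁ ∩ Y₂, x i)
      = (∑ i ∈ X₁, x i - ∑ i ∈ Y₁, x i) + (∑ i ∈ X₂, x i - ∑ i ∈ Y₂, x i) := by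
  calc _ = (∑ i ∈ X₁ ∪ X₂, x i + ∑ i ∈ X₁ ∩ X₂, x i)
        - (∑ i ∈ Y₁ ∪ Y₂, x i + ∑ i ∈ Y₁ ∩ Y₂, x i) := by
        rw [sum_sdiff_sub_sum_sdiff]; abel
    _ = _ := by rw [sum_union_inter, sum_union_inter]; abel

theorem tight_family_closed_general {n : ℕ} (f : Finset (Fin n) → Finset (Fin n) → ℝ)
    (hbi : ∀ X₁ Y₁ X₂ Y₂ : Finset (Fin n), Disjoint X₁ Y₁ → Disjoint X₂ Y₂ →
      f ((X₁ ∪ X₂) \ (Y₁ ∪ Y₂)) ((Y₁ ∪ Y₂) \ (X₁ ∪ X₂)) + f (X₁ ∩ X₂) (Y₁ ∩ Y₂)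
        ≤ f X₁ Y₁ + f X₂ Y₂)
    (x : Fin n → ℝ)
    (hx : ∀ X Y : Finset (Fin n), Disjoint X Y →
      ∑ i ∈ X, x i - ∑ i ∈ Y, x i ≤ f X Y)
    (X₁ Y₁ X₂ Y₂ : Finset (Fin n)) (h₁ : Disjoint X₁ Y₁) (h₂ : Disjoint X₂ Y₂)
    (t₁ : ∑ i ∈ X₁, x i - ∑ i ∈ Y₁, x i = f X₁ Y₁)
    (t₂ : ∑ i ∈ X₂, x i - ∑ i ∈ Y₂, x i = f X₂ Y₂) :
    (∑ i ∈ (X₁ ∪ X₂) \ (Y₁ ∪ Y₂), x i - ∑ i ∈ (Y₁ ∪ Y₂) \ (X₁ ∪ X₂), x i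
        = f ((X₁ ∪ X₂) \ (Y₁ ∪ Y₂)) ((Y₁ ∪ Y₂) \ (X₁ ∪ X₂)))
    ∧ (∑ i ∈ X₁ ∩ X₂, x i - ∑ i ∈ Y₁ ∩ Y₂, x i = f (X₁ ∩ X₂) (Y₁ ∩ Y₂)) := by
  have hmod := sum_signed_sup_add_sum_signed_inf x X₁ Y₁ X₂ Y₂
  have hsub := hbi X₁ Y₁ X₂ Y₂ h₁ h₂
  have hsup := hx ((X₁ ∪ X₂) \ (Y₁ ∪ Y₂)) _ disjoint_sdiff_sdiff
  have hinf := hx (X₁ ∩ X₂) (Y₁ ∩ Y₂) (h₁.mono inter_subset_left inter_subset_left)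
  constructor <;> linarith

/-- The tight family `F(x)` of a point of the bisubmodular polyhedron is closed
under reduced union `⊔` and intersection `⊓`. -/
theorem tight_family_closed {n : ℕ} (f : Finset (Fin n) → Finset (Fin n) → ℝ)
    (hbi : ∀ X₁ Y₁ X₂ Y₂ : Finset (Fin n), Disjoint X₁ Y₁ → Disjoint X₂ Y₂ →
      f ((X₁ ∪ X₂) \ (Y₁ ∪ Y₂)) ((Y₁ ∪ Y₂) \ (X₁ ∪ X₂)) + f (X₁ ∩ X₂) (Y₁ ∩ Y₂)
        ≤ f X₁ Y₁ + f X₂ Y₂)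
    (hf0 : f ∅ ∅ = 0)
    (x : Fin n → ℝ)
    (hx : ∀ X Y : Finset (Fin n), Disjoint X Y →
      ∑ i ∈ X, x i - ∑ i ∈ Y, x i ≤ f X Y)
    (X₁ Y₁ X₂ Y₂ : Finset (Fin n)) (h₁ : Disjoint X₁ Y₁) (h₂ : Disjoint X₂ Y₂)
    (t₁ : ∑ i ∈ X₁, x i - ∑ i ∈ Y₁, x i = f X₁ Y₁)
    (t₂ : ∑ i ∈ X₂, x i - ∑ i ∈ Y₂, x i = f X₂ Y₂) :
    (∑ i ∈ (X₁ ∪ X₂) \ (Y₁ ∪ Y₂), x i - ∑ i ∈ (Y₁ ∪ Y₂) \ (X₁ ∪ X₂), x i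
        = f ((X₁ ∪ X₂) \ (Y₁ ∪ Y₂)) ((Y₁ ∪ Y₂) \ (X₁ ∪ X₂)))
    ∧ (∑ i ∈ X₁ ∩ X₂, x i - ∑ i ∈ Y₁ ∩ Y₂, x i = f (X₁ ∩ X₂) (Y₁ ∩ Y₂)) :=
  tight_family_closed_general f hbi x hx X₁ Y₁ X₂ Y₂ h₁ h₂ t₁ t₂
end

section
/- The number of extreme points of the bisubmodular polyhedron P₊(f) is at most 2^n · n!. -/
/-!
At an extreme point `x` of `P₊(f)`, the tight pairs `(X, Y)`, those with `x(X) - x(Y) = f(X, Y)`,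
contain `(∅, ∅)`, are closed under `⊔` and `⊓` (bisubmodularity of `f` against modularity of `x`),
and their signed characteristic vectors span `ℝⁿ` (otherwise `x` moves along a direction keeping
every tight constraint tight). Such a family contains a chain `(∅, ∅) = c₀ ⊑ c₁ ⊑ ⋯ ⊑ cₙ` adding
one signed element at a time, and tightness along the chain forces `x` to be the greedy vector of
the resulting signed ordering of `N`. There are `2ⁿ · n!` signed orderings.
-/

open Finset Topology

theorem eq_zero_of_mem_extremePoints_of_active {ι α : Type*} [Finite ι] [Fintype α]
    {a : ι → α → ℝ} {b : ι → ℝ} {x d : α → ℝ}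
    (hx : x ∈ Set.extremePoints ℝ {y | ∀ i, a i ⬝ᵥ y ≤ b i})
    (hd : ∀ i, a i ⬝ᵥ x = b i → a i ⬝ᵥ d = 0) : d = 0 := by
  set A := {y | ∀ i, a i ⬝ᵥ y ≤ b i}
  have hline : ∀ i t, a i ⬝ᵥ (x + t • d) = a i ⬝ᵥ x + t * a i ⬝ᵥ d := fun i t => by
    rw [dotProduct_add, dotProduct_smul, smul_eq_mul]
  have hnear : ∀ᶠ t in 𝓝 (0 : ℝ), x + t • d ∈ A := by
    refine Filter.eventually_all.2 fun i => ?_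
    rcases (hx.1 i).eq_or_lt with hact | hslack
    · exact Filter.Eventually.of_forall fun t => by simp [hline, hd i hact, hact]
    · have hcont : Continuous fun t : ℝ => a i ⬝ᵥ x + t * a i ⬝ᵥ d := by fun_prop
      refine ((hcont.tendsto 0).eventually_lt_const (by simpa using hslack)).mono
        fun t ht => ?_
      simpa [hline] using ht.le
  have hsymm : ∀ᶠ t in 𝓝 (0 : ℝ), x + t • d ∈ A ∧ x + (-t) • d ∈ A :=
    hnear.and ((continuous_neg.tendsto' 0 0 neg_zero).eventually hnear)
  obtain ⟨t, ⟨htx, htx'⟩, ht⟩ :=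
    ((hsymm.filter_mono nhdsWithin_le_nhds).and (self_mem_nhdsWithin (s := Set.Ioi 0))).exists
  have hseg : x ∈ openSegment ℝ (x + t • d) (x + (-t) • d) :=
    ⟨1 / 2, 1 / 2, by norm_num, by norm_num, by norm_num, by module⟩
  have h := hx.2 htx htx' hseg
  rw [add_eq_left, smul_eq_zero] at h
  exact h.resolve_left (ne_of_gt ht)

namespace Bisubmodular

variable {α : Type*} [DecidableEq α]

/- A signed set `(X, Y)` is a pair of finsets, and the product order `P ≤ Q` is the paper's
`P ⊑ Q`; `reducedUnion` and `reducedInter` are `⊔` and `⊓`. -/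

def reducedUnion (P Q : Finset α × Finset α) : Finset α × Finset α :=
  ((P.1 ∪ Q.1) \ (P.2 ∪ Q.2), (P.2 ∪ Q.2) \ (P.1 ∪ Q.1))

def reducedInter (P Q : Finset α × Finset α) : Finset α × Finset α :=
  (P.1 ∩ Q.1, P.2 ∩ Q.2)

def supp (P : Finset α × Finset α) : Finset α := P.1 ∪ P.2

def signedChar (P : Finset α × Finset α) (i : α) : ℝ :=
  (if i ∈ P.1 then 1 else 0) - (if i ∈ P.2 then 1 else 0)

lemma mem_supp {P : Finset α × Finset α} {i : α} : i ∈ supp P ↔ i ∈ P.1 ∨ i ∈ P.2 :=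
  mem_union

lemma supp_mono {P Q : Finset α × Finset α} (h : P ≤ Q) : supp P ⊆ supp Q :=
  union_subset_union h.1 h.2

lemma eq_of_le_of_supp_subset {P Q : Finset α × Finset α} (hQ : Disjoint Q.1 Q.2)
    (h : P ≤ Q) (hs : supp Q ⊆ supp P) : P = Q := by
  have h1 : Q.1 ⊆ P.1 := fun i hi =>
    (mem_supp.1 (hs (mem_union_left _ hi))).resolve_right
      fun hP => disjoint_left.1 hQ hi (h.2 hP)
  have h2 : Q.2 ⊆ P.2 := fun i hi =>
    (mem_supp.1 (hs (mem_union_right _ hi))).resolve_left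
      fun hP => disjoint_left.1 hQ (h.1 hP) hi
  exact Prod.ext (h.1.antisymm h1) (h.2.antisymm h2)

lemma disjoint_reducedUnion (P Q : Finset α × Finset α) :
    Disjoint (reducedUnion P Q).1 (reducedUnion P Q).2 :=
  disjoint_left.2 fun _ h1 h2 => (mem_sdiff.1 h2).2 (mem_sdiff.1 h1).1

lemma disjoint_reducedInter {P : Finset α × Finset α} (hP : Disjoint P.1 P.2)
    (Q : Finset α × Finset α) : Disjoint (reducedInter P Q).1 (reducedInter P Q).2 :=
  hP.mono inter_subset_left inter_subset_left

lemma reducedInter_le_left (P Q : Finset α × Finset α) : reducedInter P Q ≤ P :=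
  ⟨inter_subset_left, inter_subset_left⟩

lemma le_reducedInter {S P Q : Finset α × Finset α} (hP : S ≤ P) (hQ : S ≤ Q) :
    S ≤ reducedInter P Q :=
  ⟨subset_inter hP.1 hQ.1, subset_inter hP.2 hQ.2⟩

lemma le_reducedUnion {S P Q : Finset α × Finset α} (hP : Disjoint P.1 P.2)
    (hQ : Disjoint Q.1 Q.2) (hSP : S ≤ P) (hSQ : S ≤ Q) : S ≤ reducedUnion P Q := by
  refine ⟨fun i hi => ?_, fun i hi => ?_⟩ <;>
    simp only [reducedUnion, mem_sdiff, mem_union, not_or]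
  · exact ⟨.inl (hSP.1 hi), disjoint_left.1 hP (hSP.1 hi), disjoint_left.1 hQ (hSQ.1 hi)⟩
  · exact ⟨.inl (hSP.2 hi), disjoint_right.1 hP (hSP.2 hi), disjoint_right.1 hQ (hSQ.2 hi)⟩

/-- Whatever conflicts `U` has with `S` are cancelled in `S ⊔ U`, so a second reduced union
with `S` keeps all of `S`. -/
lemma le_reducedUnion_reducedUnion {S : Finset α × Finset α} (hS : Disjoint S.1 S.2)
    (U : Finset α × Finset α) : S ≤ reducedUnion S (reducedUnion S U) := by
  refine ⟨fun i hi => ?_, fun i hi => ?_⟩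
  · simp [reducedUnion, hi, disjoint_left.1 hS hi]
  · simp [reducedUnion, hi, disjoint_right.1 hS hi]

lemma signedChar_eq_zero {P : Finset α × Finset α} {i : α} (hi : i ∉ supp P) :
    signedChar P i = 0 := by
  simp_all [signedChar, supp]

lemma signedChar_reducedUnion_add_reducedInter {P Q : Finset α × Finset α}
    (hP : Disjoint P.1 P.2) (hQ : Disjoint Q.1 Q.2) :
    signedChar (reducedUnion P Q) + signedChar (reducedInter P Q) =
      signedChar P + signedChar Q := by
  funext i
  have : i ∈ P.1 → i ∉ P.2 := fun h => disjoint_left.1 hP h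
  have : i ∈ Q.1 → i ∉ Q.2 := fun h => disjoint_left.1 hQ h
  simp only [Pi.add_apply, signedChar, reducedUnion, reducedInter, mem_sdiff, mem_union,
    mem_inter]
  by_cases i ∈ P.1 <;> by_cases i ∈ P.2 <;> by_cases i ∈ Q.1 <;> by_cases i ∈ Q.2 <;>
    simp_all

lemma signedChar_mul_signedChar {T U : Finset α × Finset α} (hT : Disjoint T.1 T.2)
    (hU : Disjoint U.1 U.2) {i : α} (hi : i ∈ supp T) :
    signedChar T i * signedChar U i =
      (if i ∈ supp (reducedInter T U) then 1 else 0) +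
        (if i ∈ supp (reducedInter T (reducedUnion T U)) then 1 else 0) - 1 := by
  have : i ∈ T.1 → i ∉ T.2 := fun h => disjoint_left.1 hT h
  have : i ∈ U.1 → i ∉ U.2 := fun h => disjoint_left.1 hU h
  simp only [signedChar, supp, reducedUnion, reducedInter, mem_sdiff, mem_union,
    mem_inter] at hi ⊢
  by_cases i ∈ T.1 <;> by_cases i ∈ T.2 <;> by_cases i ∈ U.1 <;> by_cases i ∈ U.2 <;>
    simp_all

lemma signedChar_ne_zero {P : Finset α × Finset α} (hP : Disjoint P.1 P.2) {i : α}
    (hi : i ∈ supp P) : signedChar P i ≠ 0 := by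
  have : i ∈ P.1 → i ∉ P.2 := fun h => disjoint_left.1 hP h
  rcases mem_supp.1 hi with h | h <;> simp_all [signedChar]

lemma mem_fst_iff_of_le {P Q : Finset α × Finset α} (hQ : Disjoint Q.1 Q.2) (h : P ≤ Q)
    {i : α} : i ∈ P.1 ↔ i ∈ supp P ∧ i ∈ Q.1 := by
  refine ⟨fun hi => ⟨mem_union_left _ hi, h.1 hi⟩, fun ⟨hi, hiQ⟩ => ?_⟩
  exact (mem_supp.1 hi).resolve_right fun hP => disjoint_left.1 hQ hiQ (h.2 hP)

lemma mem_snd_iff_of_le {P Q : Finset α × Finset α} (hQ : Disjoint Q.1 Q.2) (h : P ≤ Q)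
    {i : α} : i ∈ P.2 ↔ i ∈ supp P ∧ i ∉ Q.1 := by
  refine ⟨fun hi => ⟨mem_union_right _ hi, disjoint_right.1 hQ (h.2 hi)⟩, fun ⟨hi, hiQ⟩ => ?_⟩
  exact (mem_supp.1 hi).resolve_left fun hP => hiQ (h.1 hP)

structure IsReducedLattice (F : Set (Finset α × Finset α)) : Prop where
  disjoint : ∀ P ∈ F, Disjoint P.1 P.2
  reducedUnion_mem : ∀ P ∈ F, ∀ Q ∈ F, reducedUnion P Q ∈ F
  reducedInter_mem : ∀ P ∈ F, ∀ Q ∈ F, reducedInter P Q ∈ F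

variable [Fintype α]

lemma signedChar_dotProduct_eq_zero {P : Finset α × Finset α} {d : α → ℝ}
    (hd : ∀ i ∈ supp P, d i = 0) : signedChar P ⬝ᵥ d = 0 :=
  sum_eq_zero fun i _ => by
    by_cases hi : i ∈ supp P
    · simp [hd i hi]
    · simp [signedChar_eq_zero hi]

namespace IsReducedLattice

variable {F : Set (Finset α × Finset α)} (hF : IsReducedLattice F)
  (hspan : ∀ d : α → ℝ, (∀ P ∈ F, signedChar P ⬝ᵥ d = 0) → d = 0)
include hF hspan

/-- For `d` vanishing on `supp S`, the modular identity gives `χ_U ⬝ d = χ_{S ⊔ U} ⬝ d`; applying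
it twice lands above `S`. -/
theorem eq_zero_of_orthogonal_above {S : Finset α × Finset α} (hS : S ∈ F) {d : α → ℝ}
    (hdS : ∀ i ∈ supp S, d i = 0) (hd : ∀ P ∈ F, S ≤ P → signedChar P ⬝ᵥ d = 0) : d = 0 := by
  have hshift : ∀ U ∈ F, signedChar U ⬝ᵥ d = signedChar (reducedUnion S U) ⬝ᵥ d := by
    intro U hU
    have hmod := congrArg (· ⬝ᵥ d)
      (signedChar_reducedUnion_add_reducedInter (hF.disjoint S hS) (hF.disjoint U hU))
    have hS0 : signedChar S ⬝ᵥ d = 0 := signedChar_dotProduct_eq_zero hdS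
    have hSU0 : signedChar (reducedInter S U) ⬝ᵥ d = 0 := signedChar_dotProduct_eq_zero
      fun i hi => hdS i (supp_mono (reducedInter_le_left S U) hi)
    simp only [add_dotProduct] at hmod
    linarith
  refine hspan d fun U hU => ?_
  have hSU := hF.reducedUnion_mem S hS U hU
  rw [hshift U hU, hshift _ hSU]
  exact hd _ (hF.reducedUnion_mem S hS _ hSU) (le_reducedUnion_reducedUnion (hF.disjoint S hS) U)

theorem exists_lt {S : Finset α × Finset α} (hS : S ∈ F) (hSu : supp S ≠ univ) :
    ∃ T ∈ F, S < T := by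
  by_contra hnone
  obtain ⟨i₀, hi₀⟩ : ∃ i₀, i₀ ∉ supp S := by simpa [eq_univ_iff_forall] using hSu
  have h := hF.eq_zero_of_orthogonal_above hspan hS (d := Pi.single i₀ 1)
    (fun i hi => Pi.single_eq_of_ne (by rintro rfl; exact hi₀ hi) _) fun P hP hSP => by
      obtain rfl : P = S := by_contra fun hPS => hnone ⟨P, hP, lt_of_le_of_ne hSP (Ne.symm hPS)⟩
      simp [signedChar_eq_zero hi₀]
  simpa using congrFun h i₀

/-- Two new elements `e ≠ e'` of `T` would be indistinguishable by every `U ⊒ S` in `F`, since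
`T ⊓ U` and `T ⊓ (T ⊔ U)` are `S` or `T`; then `χ_T(e) 1_e - χ_T(e') 1_e'` contradicts
`eq_zero_of_orthogonal_above`. -/
theorem card_supp_sdiff_le_one {S T : Finset α × Finset α} (hS : S ∈ F) (hT : T ∈ F)
    (hST : S ≤ T) (hbetween : ∀ M ∈ F, S ≤ M → M ≤ T → M = S ∨ M = T) :
    (supp T \ supp S).card ≤ 1 := by
  have hTd := hF.disjoint T hT
  refine card_le_one.2 fun e he e' he' => by_contra fun hee => ?_
  rw [mem_sdiff] at he he'
  have hsame : ∀ M ∈ F, S ≤ M → M ≤ T → (e ∈ supp M ↔ e' ∈ supp M) := by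
    intro M hM hSM hMT
    rcases hbetween M hM hSM hMT with rfl | rfl <;> simp [he, he']
  have h := hF.eq_zero_of_orthogonal_above hspan hS
    (d := Pi.single e (signedChar T e) - Pi.single e' (signedChar T e'))
    (fun i hi => by
      simp [show i ≠ e by rintro rfl; exact he.2 hi, show i ≠ e' by rintro rfl; exact he'.2 hi])
    fun U hU hSU => by
      have hUd := hF.disjoint U hU
      have hTU := hF.reducedUnion_mem T hT U hU
      rw [dotProduct_sub, dotProduct_single, dotProduct_single, mul_comm,
        mul_comm (signedChar U e'), signedChar_mul_signedChar hTd hUd he.1,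
        signedChar_mul_signedChar hTd hUd he'.1]
      simp only [hsame _ (hF.reducedInter_mem T hT U hU) (le_reducedInter hST hSU)
          (reducedInter_le_left T U),
        hsame _ (hF.reducedInter_mem T hT _ hTU)
          (le_reducedInter hST (le_reducedUnion hTd hUd hST hSU)) (reducedInter_le_left T _),
        sub_self]
  have he0 := congrFun h e
  simp only [Pi.sub_apply, Pi.single_eq_same, Pi.single_eq_of_ne hee, sub_zero,
    Pi.zero_apply] at he0
  exact signedChar_ne_zero hTd he.1 he0

theorem exists_cover {S : Finset α × Finset α} (hS : S ∈ F) (hSu : supp S ≠ univ) :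
    ∃ T ∈ F, S ≤ T ∧ (supp T).card = (supp S).card + 1 := by
  obtain ⟨T, hTmin⟩ := (Set.toFinite _).exists_minimal (hF.exists_lt hspan hS hSu)
  obtain ⟨hT, hST⟩ := hTmin.prop
  have hbetween : ∀ M ∈ F, S ≤ M → M ≤ T → M = S ∨ M = T := fun M hM hSM hMT =>
    (eq_or_lt_of_le hSM).imp Eq.symm fun hlt => le_antisymm hMT (hTmin.2 ⟨hM, hlt⟩ hMT)
  have hsub : supp S ⊂ supp T := Finset.ssubset_iff_subset_ne.2 ⟨supp_mono hST.le, fun h =>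
    hST.ne (eq_of_le_of_supp_subset (hF.disjoint T hT) hST.le h.symm.subset)⟩
  have hle := hF.card_supp_sdiff_le_one hspan hS hT hST.le hbetween
  have := card_sdiff_of_subset hsub.subset
  have := card_lt_card hsub
  exact ⟨T, hT, hST.le, by omega⟩

theorem exists_chain (hbot : ((∅, ∅) : Finset α × Finset α) ∈ F) :
    ∃ c : ℕ → Finset α × Finset α,
      Monotone c ∧ ∀ k, c k ∈ F ∧ (supp (c k)).card = min k (Fintype.card α) := by
  have step : ∀ S ∈ F, ∃ T ∈ F, S ≤ T ∧
      (supp T).card = min ((supp S).card + 1) (Fintype.card α) := by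
    intro S hS
    by_cases hSu : supp S = univ
    · exact ⟨S, hS, le_rfl, by rw [hSu, card_univ]; omega⟩
    · obtain ⟨T, hT, hST, hcard⟩ := hF.exists_cover hspan hS hSu
      have := card_le_univ (supp T)
      exact ⟨T, hT, hST, by omega⟩
  choose! next hnext using step
  have hchain : ∀ k, next^[k] (∅, ∅) ∈ F ∧
      (supp (next^[k] (∅, ∅))).card = min k (Fintype.card α) := by
    intro k
    induction k with
    | zero => exact ⟨hbot, by simp [supp]⟩
    | succ k ih =>
      rw [Function.iterate_succ_apply']
      obtain ⟨hmem, -, hcard⟩ := hnext _ ih.1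
      exact ⟨hmem, by omega⟩
  refine ⟨fun k => next^[k] (∅, ∅), monotone_nat_of_le_succ fun k => ?_, hchain⟩
  rw [Function.iterate_succ_apply']
  exact (hnext _ (hchain k).1).2.1

end IsReducedLattice

def signedPrefix (r : α → ℕ) (X : Finset α) (k : ℕ) : Finset α × Finset α :=
  (univ.filter fun i => r i < k ∧ i ∈ X, univ.filter fun i => r i < k ∧ i ∉ X)

/-- Elements enter the chain in the order `r`, on the positive side iff they lie in `X`; each
coordinate is the signed increment of `f` at its entry. -/
def greedyVector (f : Finset α → Finset α → ℝ) (r : α → ℕ) (X : Finset α) (i : α) : ℝ :=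
  (if i ∈ X then 1 else -1) *
    (f (signedPrefix r X (r i + 1)).1 (signedPrefix r X (r i + 1)).2 -
      f (signedPrefix r X (r i)).1 (signedPrefix r X (r i)).2)

theorem exists_signedPrefix_eq_of_chain {c : ℕ → Finset α × Finset α} (hmono : Monotone c)
    (hdisj : ∀ k, Disjoint (c k).1 (c k).2)
    (hcard : ∀ k, (supp (c k)).card = min k (Fintype.card α)) :
    ∃ r : α ≃ Fin (Fintype.card α), ∃ X : Finset α,
      ∀ k ≤ Fintype.card α, c k = signedPrefix (fun i => r i) X k := by
  set n := Fintype.card α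
  have hfull : supp (c n) = univ := eq_univ_of_card _ (by rw [hcard, min_self])
  have hex : ∀ i, ∃ k, i ∈ supp (c (k + 1)) := fun i =>
    ⟨n, supp_mono (hmono n.le_succ) (hfull ▸ mem_univ i)⟩
  let r (i : α) : ℕ := Nat.find (hex i)
  have hr : ∀ i k, i ∈ supp (c k) ↔ r i < k := by
    intro i k
    refine ⟨fun hi => ?_, fun hi => supp_mono (hmono hi) (Nat.find_spec (hex i))⟩
    cases k with
    | zero => simp [card_eq_zero.1 (hcard 0)] at hi
    | succ k => exact Nat.lt_succ_of_le (Nat.find_min' _ hi)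
  have hrn : ∀ i, r i < n := fun i => (hr i n).1 (hfull ▸ mem_univ i)
  have hinj : Function.Injective r := by
    intro i j hij
    have hle : (supp (c (r i + 1)) \ supp (c (r i))).card ≤ 1 := by
      rw [card_sdiff_of_subset (supp_mono (hmono (r i).le_succ)), hcard, hcard]
      omega
    refine card_le_one.1 hle i ?_ j ?_ <;> simp [hr, hij]
  let e : α ≃ Fin n := Equiv.ofBijective (fun i => ⟨r i, hrn i⟩)
    ((Fintype.bijective_iff_injective_and_card _).2
      ⟨fun i j h => hinj (Fin.mk.inj_iff.1 h), Fintype.card_fin n |>.symm⟩)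
  refine ⟨e, (c n).1, fun k hk => Prod.ext ?_ ?_⟩ <;> ext i <;>
    simp [signedPrefix, e, ← hr, mem_fst_iff_of_le (hdisj n) (hmono hk),
      mem_snd_iff_of_le (hdisj n) (hmono hk)]

lemma signedChar_signedPrefix (r : α → ℕ) (X : Finset α) (k : ℕ) (i : α) :
    signedChar (signedPrefix r X k) i = if r i < k then (if i ∈ X then 1 else -1) else 0 := by
  by_cases hk : r i < k <;> by_cases hX : i ∈ X <;> simp [signedChar, signedPrefix, hk, hX]

/-- The prefixes of lengths `r i` and `r i + 1` differ only by `i`, on the side given by `X`. -/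
theorem eq_greedyVector_of_tight {f : Finset α → Finset α → ℝ} {r : α → ℕ}
    (hr : Function.Injective r) {X : Finset α} {m : ℕ} (hrm : ∀ i, r i < m) {x : α → ℝ}
    (htight : ∀ k ≤ m, signedChar (signedPrefix r X k) ⬝ᵥ x =
      f (signedPrefix r X k).1 (signedPrefix r X k).2) :
    x = greedyVector f r X := by
  funext i
  have hstep : signedChar (signedPrefix r X (r i + 1)) - signedChar (signedPrefix r X (r i)) =
      Pi.single i (if i ∈ X then 1 else -1) := by
    funext j
    by_cases hj : j = i
    · subst hj
      simp [signedChar_signedPrefix]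
    · have hrj : r j < r i + 1 ↔ r j < r i := by have := hr.ne hj; omega
      simp [signedChar_signedPrefix, hj, hrj]
  have hdiff := congrArg (· ⬝ᵥ x) hstep
  simp only [sub_dotProduct, single_dotProduct] at hdiff
  rw [greedyVector, ← htight _ (hrm i), ← htight _ (hrm i).le, hdiff]
  split_ifs <;> ring

def bisubmodularPolyhedron (f : Finset α → Finset α → ℝ) : Set (α → ℝ) :=
  {x | ∀ X Y : Finset α, Disjoint X Y → ∑ i ∈ X, x i - ∑ i ∈ Y, x i ≤ f X Y}

def IsBisubmodular (f : Finset α → Finset α → ℝ) : Prop :=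
  ∀ P Q : Finset α × Finset α, Disjoint P.1 P.2 → Disjoint Q.1 Q.2 →
    f (reducedUnion P Q).1 (reducedUnion P Q).2 + f (reducedInter P Q).1 (reducedInter P Q).2 ≤
      f P.1 P.2 + f Q.1 Q.2

def tightSets (f : Finset α → Finset α → ℝ) (x : α → ℝ) : Set (Finset α × Finset α) :=
  {P | Disjoint P.1 P.2 ∧ signedChar P ⬝ᵥ x = f P.1 P.2}

lemma signedChar_dotProduct (P : Finset α × Finset α) (x : α → ℝ) :
    signedChar P ⬝ᵥ x = ∑ i ∈ P.1, x i - ∑ i ∈ P.2, x i := by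
  simp [dotProduct, signedChar, sub_mul, sum_sub_distrib, sum_ite_mem]

lemma bisubmodularPolyhedron_eq (f : Finset α → Finset α → ℝ) :
    bisubmodularPolyhedron f =
      {x | ∀ P : {P : Finset α × Finset α // Disjoint P.1 P.2},
        signedChar P.1 ⬝ᵥ x ≤ f P.1.1 P.1.2} := by
  ext x
  simp [bisubmodularPolyhedron, signedChar_dotProduct]

variable {f : Finset α → Finset α → ℝ} {x : α → ℝ}

theorem isReducedLattice_tightSets (hf : IsBisubmodular f) (hx : x ∈ bisubmodularPolyhedron f) :
    IsReducedLattice (tightSets f x) := by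
  have hclosed : ∀ P ∈ tightSets f x, ∀ Q ∈ tightSets f x,
      reducedUnion P Q ∈ tightSets f x ∧ reducedInter P Q ∈ tightSets f x := by
    rintro P ⟨hP, hPx⟩ Q ⟨hQ, hQx⟩
    have hmod := congrArg (· ⬝ᵥ x) (signedChar_reducedUnion_add_reducedInter hP hQ)
    simp only [add_dotProduct] at hmod
    have hU := disjoint_reducedUnion P Q
    have hI := disjoint_reducedInter hP Q
    have hUx := signedChar_dotProduct (reducedUnion P Q) x ▸ hx _ _ hU
    have hIx := signedChar_dotProduct (reducedInter P Q) x ▸ hx _ _ hI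
    have := hf P Q hP hQ
    exact ⟨⟨hU, by linarith⟩, ⟨hI, by linarith⟩⟩
  exact ⟨fun P hP => hP.1, fun P hP Q hQ => (hclosed P hP Q hQ).1,
    fun P hP Q hQ => (hclosed P hP Q hQ).2⟩

theorem orthogonal_tightSets_eq_zero (hx : x ∈ Set.extremePoints ℝ (bisubmodularPolyhedron f))
    (d : α → ℝ) (hd : ∀ P ∈ tightSets f x, signedChar P ⬝ᵥ d = 0) : d = 0 := by
  rw [bisubmodularPolyhedron_eq] at hx
  exact eq_zero_of_mem_extremePoints_of_active hx fun P hP => hd P ⟨P.2, hP⟩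

theorem extremePoints_subset_range_greedyVector (hf : IsBisubmodular f) (hf0 : f ∅ ∅ = 0) :
    Set.extremePoints ℝ (bisubmodularPolyhedron f) ⊆
      Set.range fun p : (α ≃ Fin (Fintype.card α)) × Finset α =>
        greedyVector f (fun i => p.1 i) p.2 := by
  intro x hx
  have hF := isReducedLattice_tightSets hf hx.1
  obtain ⟨c, hmono, hc⟩ := hF.exists_chain (orthogonal_tightSets_eq_zero hx)
    ⟨disjoint_empty_left _, by simp [signedChar_dotProduct, hf0]⟩
  obtain ⟨r, X, hrX⟩ := exists_signedPrefix_eq_of_chain hmono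
    (fun k => hF.disjoint _ (hc k).1) (fun k => (hc k).2)
  refine ⟨(r, X), (eq_greedyVector_of_tight (fun i j h => r.injective (Fin.ext h))
    (fun i => (r i).isLt) fun k hk => ?_).symm⟩
  exact (hrX k hk ▸ (hc k).1).2

theorem finite_extremePoints (hf : IsBisubmodular f) (hf0 : f ∅ ∅ = 0) :
    (Set.extremePoints ℝ (bisubmodularPolyhedron f)).Finite :=
  (Set.finite_range _).subset (extremePoints_subset_range_greedyVector hf hf0)

theorem ncard_extremePoints_le (hf : IsBisubmodular f) (hf0 : f ∅ ∅ = 0) :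
    (Set.extremePoints ℝ (bisubmodularPolyhedron f)).ncard ≤
      2 ^ Fintype.card α * (Fintype.card α).factorial :=
  calc _ ≤ (Set.range _).ncard :=
        Set.ncard_le_ncard (extremePoints_subset_range_greedyVector hf hf0) (Set.finite_range _)
    _ ≤ Nat.card ((α ≃ Fin (Fintype.card α)) × Finset α) := by
      rw [← Nat.card_coe_set_eq]
      exact Finite.card_range_le _
    _ = 2 ^ Fintype.card α * (Fintype.card α).factorial := by
      rw [Nat.card_eq_fintype_card, Fintype.card_prod, Fintype.card_equiv (Fintype.equivFin α),
        Fintype.card_finset, mul_comm]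

end Bisubmodular

/-- The number of extreme points of the bisubmodular polyhedron `P₊(f)` is at most
`2^n · n!`. -/
theorem card_extremePoints_le {n : ℕ} (f : Finset (Fin n) → Finset (Fin n) → ℝ)
    (hbi : ∀ X₁ Y₁ X₂ Y₂ : Finset (Fin n), Disjoint X₁ Y₁ → Disjoint X₂ Y₂ →
      f ((X₁ ∪ X₂) \ (Y₁ ∪ Y₂)) ((Y₁ ∪ Y₂) \ (X₁ ∪ X₂)) + f (X₁ ∩ X₂) (Y₁ ∩ Y₂)
        ≤ f X₁ Y₁ + f X₂ Y₂)
    (hf0 : f ∅ ∅ = 0) :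
    (Set.extremePoints ℝ {x : Fin n → ℝ | ∀ X Y : Finset (Fin n), Disjoint X Y →
        ∑ i ∈ X, x i - ∑ i ∈ Y, x i ≤ f X Y}).Finite ∧
    (Set.extremePoints ℝ {x : Fin n → ℝ | ∀ X Y : Finset (Fin n), Disjoint X Y →
        ∑ i ∈ X, x i - ∑ i ∈ Y, x i ≤ f X Y}).ncard ≤ 2 ^ n * n.factorial := by
  have hf : Bisubmodular.IsBisubmodular f := fun P Q => hbi P.1 P.2 Q.1 Q.2
  refine ⟨Bisubmodular.finite_extremePoints hf hf0, ?_⟩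
  have hcard := Bisubmodular.ncard_extremePoints_le hf hf0
  rwa [Fintype.card_fin] at hcard
end

section
/- A signed subset (X,Y) of the vertex set of an acyclic bidirected graph G is an ideal of G if and only if it is an ideal of the transitive closure of G. That is, ⟨∂a, χ_{(X,Y)}⟩ ≤ 0 for all arcs a of G if and only if the same holds for all arcs of the transitive closure. -/
open Finset

/-- Characteristic vector of a single vertex. -/
def vchi {n : ℕ} (i : Fin n) : Fin n → ℤ := fun v => if v = i then 1 else 0

/-- A boundary `b = ∂a` of an arc of a bidirected graph: type `i−j` (with `i ≠ j`),
type `i+j` (two tails, possibly a selfloop `2i`), or type `−i−j` (two heads,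
possibly a selfloop `−2i`). -/
def IsArcBd {n : ℕ} (b : Fin n → ℤ) : Prop :=
  (∃ i j : Fin n, i ≠ j ∧ b = vchi i - vchi j) ∨
  (∃ i j : Fin n, b = vchi i + vchi j) ∨
  (∃ i j : Fin n, b = -vchi i - vchi j)

/-- `b` is the boundary of a selfloop. -/
def IsSelfloopBd {n : ℕ} (b : Fin n → ℤ) : Prop :=
  ∃ i : Fin n, b = 2 • vchi i ∨ b = -(2 • vchi i)

/-- The (boundaries of the) transitive closure of a bidirected graph, generated by the
two transitivity operations: `∂a'' = ∂a + ∂a'` when `a, a'` (not both selfloops) are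
oppositely incident at a common vertex, and `2∂a'' = ∂a + ∂a'` for selfloops at
distinct vertices. -/
inductive TransClosure {n : ℕ} (A : Set (Fin n → ℤ)) : (Fin n → ℤ) → Prop
  | base {b : Fin n → ℤ} (hb : b ∈ A) : TransClosure A b
  | comp {a a' : Fin n → ℤ} (ha : TransClosure A a) (ha' : TransClosure A a')
      (hopp : ∃ v : Fin n, 0 < a v ∧ a' v < 0)
      (hnl : ¬(IsSelfloopBd a ∧ IsSelfloopBd a')) : TransClosure A (a + a')
  | loops {a a' b : Fin n → ℤ} {i j : Fin n} (ha : TransClosure A a)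
      (ha' : TransClosure A a') (hi : a = 2 • vchi i ∨ a = -(2 • vchi i))
      (hj : a' = 2 • vchi j ∨ a' = -(2 • vchi j)) (hij : i ≠ j)
      (hb : (2 : ℤ) • b = a + a') : TransClosure A b

/-- A signed subset of the vertex set of an acyclic bidirected graph is an ideal of the
graph iff it is an ideal of its transitive closure. -/
theorem ideal_iff_ideal_transClosure {n : ℕ} (A : Set (Fin n → ℤ))
    (harc : ∀ b ∈ A, IsArcBd b)
    (hacyc : ¬ ∃ a ∈ A, ∃ a' ∈ A, a = -a')
    (X Y : Finset (Fin n)) (hXY : Disjoint X Y) :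
    (∀ b ∈ A, ∑ v : Fin n, b v * (if v ∈ X then 1 else if v ∈ Y then -1 else 0) ≤ 0)
    ↔ (∀ b : Fin n → ℤ, TransClosure A b →
        ∑ v : Fin n, b v * (if v ∈ X then 1 else if v ∈ Y then -1 else 0) ≤ 0) := by
  constructor
  · intro h b hb
    induction hb with
    | base hb => exact h _ hb
    | comp ha ha' hopp hnl iha iha' =>
      simp only [Pi.add_apply, add_mul, Finset.sum_add_distrib]
      exact add_nonpos iha iha'
    | @loops a a' b i j ha ha' hi hj hij hb iha iha' =>
      have h2 : (2 : ℤ) * ∑ v : Fin n, b v * (if v ∈ X then 1 else if v ∈ Y then -1 else 0)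
          = (∑ v : Fin n, a v * (if v ∈ X then 1 else if v ∈ Y then -1 else 0))
            + ∑ v : Fin n, a' v * (if v ∈ X then 1 else if v ∈ Y then -1 else 0) := by
        rw [Finset.mul_sum, ← Finset.sum_add_distrib]
        refine Finset.sum_congr rfl fun v _ => ?_
        have := congrFun hb v
        simp only [Pi.smul_apply, smul_eq_mul, Pi.add_apply] at this
        rw [← mul_assoc, this, add_mul]
      linarith
  · intro h b hb
    exact h b (TransClosure.base hb)
end

section
/- A vector x defined greedily from a bisubmodular function f along a full chain of signed subsets lies in P₊(f): if (∅,∅)=(U₀,W₀)⊏⋯⊏(Uₙ,Wₙ) is a chain in 3^N adding one signed element at a time, and x is defined by the increments f(Uₖ,Wₖ)−f(U_{k−1},W_{k−1}) (with sign −1 if the element is added to the W-side), then x(X)−x(Y) ≤ f(X,Y) for every (X,Y) ∈ 3^N. -/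
/-!
Backward induction along the chain. For `k = n, …, 0` we show that every signed set `(A, B)`
extending `(Uₖ, Wₖ)` satisfies `x(A \ Uₖ) - x(B \ Wₖ) ≤ f(A, B) - f(Uₖ, Wₖ)`; at `k = n` the only
such set is `(Uₙ, Wₙ)`, and at `k = 0` this is the claim. If step `k` adds `e` to the `U`-side, then
`x e = f(Uₖ₊₁, Wₖ₊₁) - f(Uₖ, Wₖ)` bounds both the gain of adding `e` to the first side of a larger
signed set and the gain of removing `e` from its second side, each by one application of
bisubmodularity. A step on the `W`-side is the same step for `(X, Y) ↦ f(Y, X)` and `-x`.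
-/

open Finset

variable {α : Type*} [DecidableEq α]

def Bisubmodular (f : Finset α → Finset α → ℝ) : Prop :=
  ∀ X₁ Y₁ X₂ Y₂ : Finset α, Disjoint X₁ Y₁ → Disjoint X₂ Y₂ →
    f ((X₁ ∪ X₂) \ (Y₁ ∪ Y₂)) ((Y₁ ∪ Y₂) \ (X₁ ∪ X₂)) + f (X₁ ∩ X₂) (Y₁ ∩ Y₂) ≤
      f X₁ Y₁ + f X₂ Y₂

namespace Bisubmodular

variable {f : Finset α → Finset α → ℝ} {A B U W : Finset α} {e : α}

theorem swap (hf : Bisubmodular f) : Bisubmodular (fun X Y ↦ f Y X) :=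
  fun X₁ Y₁ X₂ Y₂ h₁ h₂ ↦ hf Y₁ X₁ Y₂ X₂ h₁.symm h₂.symm

theorem insert_left_sub_le (hf : Bisubmodular f) (hAB : Disjoint A B) (hUA : U ⊆ A)
    (hWB : W ⊆ B) (heA : e ∉ A) (heB : e ∉ B) :
    f (insert e A) B - f A B ≤ f (insert e U) W - f U W := by
  have heAB : Disjoint (insert e A) B := disjoint_insert_left.mpr ⟨heB, hAB⟩
  have hUW : Disjoint (insert e U) W :=
    heAB.mono (insert_subset_insert e hUA) hWB
  have h := hf A B (insert e U) W hAB hUW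
  rw [union_insert, union_eq_left.mpr hUA, union_eq_left.mpr hWB,
    sdiff_eq_self_of_disjoint heAB, sdiff_eq_self_of_disjoint heAB.symm,
    inter_insert_of_notMem heA, inter_eq_right.mpr hUA, inter_eq_right.mpr hWB] at h
  linarith

theorem erase_right_sub_le (hf : Bisubmodular f) (hAB : Disjoint A B) (hUA : U ⊆ A)
    (hWB : W ⊆ B) (heB : e ∈ B) (heW : e ∉ W) :
    f A (B.erase e) - f A B ≤ f (insert e U) W - f U W := by
  have heA : e ∉ A := disjoint_right.mp hAB heB
  have hUW : Disjoint (insert e U) W :=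
    disjoint_insert_left.mpr ⟨heW, hAB.mono hUA hWB⟩
  have h := hf A B (insert e U) W hAB hUW
  rw [union_insert, union_eq_left.mpr hUA, union_eq_left.mpr hWB,
    insert_sdiff_of_mem A heB, sdiff_eq_self_of_disjoint hAB, sdiff_insert,
    sdiff_eq_self_of_disjoint hAB.symm,
    inter_insert_of_notMem heA, inter_eq_right.mpr hUA, inter_eq_right.mpr hWB] at h
  linarith

end Bisubmodular

def GreedyBound (f : Finset α → Finset α → ℝ) (x : α → ℝ) (U W : Finset α) : Prop :=
  ∀ A B : Finset α, Disjoint A B → U ⊆ A → W ⊆ B →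
    ∑ i ∈ A \ U, x i - ∑ i ∈ B \ W, x i ≤ f A B - f U W

namespace GreedyBound

variable {f : Finset α → Finset α → ℝ} {x : α → ℝ} {U W : Finset α} {e : α}

theorem of_union_eq_univ [Fintype α] (h : U ∪ W = univ) : GreedyBound f x U W := by
  intro A B hAB hUA hWB
  have hmem (a : α) : a ∈ U ∨ a ∈ W := mem_union.mp (h ▸ mem_univ a)
  have hAU : A = U := Subset.antisymm
    (fun a ha ↦ (hmem a).resolve_right fun haW ↦ disjoint_left.mp hAB ha (hWB haW)) hUA
  have hBW : B = W := Subset.antisymm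
    (fun a ha ↦ (hmem a).resolve_left fun haU ↦ disjoint_left.mp hAB (hUA haU) ha) hWB
  simp [hAU, hBW]

theorem swap (h : GreedyBound f x U W) : GreedyBound (fun X Y ↦ f Y X) (-x) W U := by
  intro A B hAB hWA hUB
  have hBA := h B A hAB.symm hUB hWA
  simp only [Pi.neg_apply, sum_neg_distrib]
  linarith

theorem of_insert_left (hf : Bisubmodular f) (heU : e ∉ U) (heW : e ∉ W)
    (hx : x e = f (insert e U) W - f U W) (h : GreedyBound f x (insert e U) W) :
    GreedyBound f x U W := by
  intro A B hAB hUA hWB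
  by_cases heA : e ∈ A
  · have hrec := h A B hAB (insert_subset heA hUA) hWB
    rw [sdiff_insert] at hrec
    have hsum := sum_erase_add _ x (mem_sdiff.mpr ⟨heA, heU⟩)
    linarith
  by_cases heB : e ∈ B
  · have hAB' : Disjoint (insert e A) (B.erase e) :=
      disjoint_insert_left.mpr ⟨notMem_erase e B, hAB.mono_right (erase_subset e B)⟩
    have hrec := h _ _ hAB' (insert_subset_insert e hUA) (subset_erase.mpr ⟨hWB, heW⟩)
    rw [insert_sdiff_insert, sdiff_insert_of_notMem heA, erase_sdiff_comm] at hrec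
    have hins := hf.insert_left_sub_le (hAB.mono_right (erase_subset e B)) hUA
      (subset_erase.mpr ⟨hWB, heW⟩) heA (notMem_erase e B)
    have hers := hf.erase_right_sub_le hAB hUA hWB heB heW
    have hsum := sum_erase_add _ x (mem_sdiff.mpr ⟨heB, heW⟩)
    linarith
  · have hrec := h _ B (disjoint_insert_left.mpr ⟨heB, hAB⟩) (insert_subset_insert e hUA) hWB
    rw [insert_sdiff_insert, sdiff_insert_of_notMem heA] at hrec
    have hins := hf.insert_left_sub_le hAB hUA hWB heA heB
    linarith

theorem of_insert_right (hf : Bisubmodular f) (heU : e ∉ U) (heW : e ∉ W)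
    (hx : x e = -(f U (insert e W) - f U W)) (h : GreedyBound f x U (insert e W)) :
    GreedyBound f x U W := by
  simpa using (h.swap.of_insert_left hf.swap heW heU (by simp [hx])).swap

end GreedyBound

/-- A vector defined greedily from a bisubmodular function along a full chain of
signed subsets lies in the bisubmodular polyhedron `P₊(f)`. -/
theorem greedy_mem_polyhedron {n : ℕ} (f : Finset (Fin n) → Finset (Fin n) → ℝ)
    (hbi : ∀ X₁ Y₁ X₂ Y₂ : Finset (Fin n), Disjoint X₁ Y₁ → Disjoint X₂ Y₂ →
      f ((X₁ ∪ X₂) \ (Y₁ ∪ Y₂)) ((Y₁ ∪ Y₂) \ (X₁ ∪ X₂)) + f (X₁ ∩ X₂) (Y₁ ∩ Y₂)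
        ≤ f X₁ Y₁ + f X₂ Y₂)
    (hf0 : f ∅ ∅ = 0)
    (U W : ℕ → Finset (Fin n)) (x : Fin n → ℝ)
    (hU0 : U 0 = ∅) (hW0 : W 0 = ∅)
    (hdisj : ∀ k ≤ n, Disjoint (U k) (W k))
    (hspan : U n ∪ W n = Finset.univ)
    (hstep : ∀ k < n,
      (∃ i : Fin n, i ∉ U k ∧ U (k + 1) = insert i (U k) ∧ W (k + 1) = W k ∧
        x i = f (U (k + 1)) (W (k + 1)) - f (U k) (W k)) ∨
      (∃ i : Fin n, i ∉ W k ∧ W (k + 1) = insert i (W k) ∧ U (k + 1) = U k ∧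
        x i = -(f (U (k + 1)) (W (k + 1)) - f (U k) (W k)))) :
    ∀ X Y : Finset (Fin n), Disjoint X Y →
      ∑ i ∈ X, x i - ∑ i ∈ Y, x i ≤ f X Y := by
  have hbound : ∀ k ≤ n, GreedyBound f x (U k) (W k) := by
    intro k hk
    induction hk using Nat.decreasingInduction with
    | self => exact GreedyBound.of_union_eq_univ hspan
    | of_succ k hk ih =>
      have hd := hdisj (k + 1) hk
      rcases hstep k hk with ⟨e, heU, hU, hW, hx⟩ | ⟨e, heW, hW, hU, hx⟩
      · rw [hU, hW] at hd hx ih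
        exact ih.of_insert_left hbi heU (disjoint_left.mp hd (mem_insert_self e _)) hx
      · rw [hU, hW] at hd hx ih
        exact ih.of_insert_right hbi (disjoint_right.mp hd (mem_insert_self e _)) heW hx
  intro X Y hXY
  simpa [hU0, hW0, hf0] using hbound 0 n.zero_le X Y hXY
end

section
/- The greedy vector x* defined by x*(n) = f({n},∅) and x*(i) = f({n,…,i},∅) − f({n,…,i+1},∅) for i = n−1,…,1 maximizes Σᵢ w(i)x(i) over P₊(f) for any weight vector w with w(n) ≫ ⋯ ≫ w(1) > 0 sufficiently separated; in particular x* is an extreme point of P₊(f). -/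
/-!
`g X := f X ∅` is submodular, so Edmonds' greedy argument applies. Build `X` by inserting its
elements from the largest down: when `i` is inserted into `s ⊆ Ioi i`, submodularity gives
`x*(i) = g (Ici i) - g (Ioi i) ≤ g (insert i s) - g s`, hence `x*(X) ≤ g X`, with equality on
upper sets. Bisubmodularity applied to `(X, Y)` and `(N, ∅)` gives
`g X + g (N \ Y) ≤ f X Y + g N`, which turns `x*(X) + x*(N \ Y) ≤ g X + g (N \ Y)` into
`x*(X) - x*(Y) ≤ f X Y`. Finally, `x*` is the only point of `P₊(f)` that is tight on every
upper set, so it is not interior to any segment of `P₊(f)`.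
-/

open Finset

section ExtremePoints

variable {𝕜 E ι : Type*} [Field 𝕜] [LinearOrder 𝕜] [IsStrictOrderedRing 𝕜]
  [AddCommGroup E] [Module 𝕜 E]

theorem eq_of_mem_openSegment_of_le {φ : E →ₗ[𝕜] 𝕜} {c : 𝕜} {x x₁ x₂ : E}
    (hx : x ∈ openSegment 𝕜 x₁ x₂) (h₁ : φ x₁ ≤ c) (h₂ : φ x₂ ≤ c) (htight : φ x = c) :
    φ x₁ = c := by
  obtain ⟨a, b, ha, hb, hab, rfl⟩ := hx
  rw [map_add, map_smul, map_smul, smul_eq_mul, smul_eq_mul] at htight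
  by_contra hne
  have : a * φ x₁ + b * φ x₂ < a * c + b * c :=
    add_lt_add_of_lt_of_le (mul_lt_mul_of_pos_left (lt_of_le_of_ne h₁ hne) ha)
      (mul_le_mul_of_nonneg_left h₂ hb.le)
  rw [← add_mul, hab, one_mul] at this
  exact this.ne htight

theorem mem_extremePoints_of_tight {S : Set E} {x : E} (φ : ι → E →ₗ[𝕜] 𝕜) (c : ι → 𝕜)
    (hle : ∀ y ∈ S, ∀ k, φ k y ≤ c k) (hx : x ∈ S) (htight : ∀ k, φ k x = c k)
    (huniq : ∀ y ∈ S, (∀ k, φ k y = c k) → y = x) : x ∈ S.extremePoints 𝕜 :=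
  ⟨hx, fun x₁ hx₁ x₂ hx₂ hseg => huniq x₁ hx₁ fun k =>
    eq_of_mem_openSegment_of_le hseg (hle x₁ hx₁ k) (hle x₂ hx₂ k) (htight k)⟩

end ExtremePoints

section Greedy

variable {α : Type*} [LinearOrder α] [LocallyFiniteOrderTop α] (g : Finset α → ℝ)

def greedyVector (i : α) : ℝ := g (Ici i) - g (Ioi i)

theorem sum_greedyVector_of_isUpperSet {S : Finset α} (hS : IsUpperSet (S : Set α)) :
    ∑ i ∈ S, greedyVector g i = g S - g ∅ := by
  induction S using Finset.induction_on_min with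
  | empty => simp
  | insert a s ha ih =>
    have hs : s = Ioi a := by
      ext x
      refine ⟨fun hx => mem_Ioi.2 (ha x hx), fun hx => ?_⟩
      have hx' := hS (mem_Ioi.1 hx).le (by simp : a ∈ (↑(insert a s) : Set α))
      exact (mem_insert.1 hx').resolve_left (mem_Ioi.1 hx).ne'
    subst hs
    rw [sum_insert notMem_Ioi_self, ih (by simpa using isUpperSet_Ioi a), Ioi_insert,
      greedyVector]
    ring

theorem sum_greedyVector_le (hg : ∀ X Y, g (X ∪ Y) + g (X ∩ Y) ≤ g X + g Y) (X : Finset α) :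
    ∑ i ∈ X, greedyVector g i ≤ g X - g ∅ := by
  induction X using Finset.induction_on_min with
  | empty => simp
  | insert a s ha ih =>
    have hs : s ⊆ Ioi a := fun x hx => mem_Ioi.2 (ha x hx)
    have hsub := hg (insert a s) (Ioi a)
    rw [insert_union, union_eq_right.2 hs, Ioi_insert,
      insert_inter_of_notMem notMem_Ioi_self, inter_eq_left.2 hs] at hsub
    rw [sum_insert fun h => (ha a h).false, greedyVector]
    linarith

theorem eq_greedyVector_of_sum_eq {y : α → ℝ}
    (hy : ∀ S : Finset α, IsUpperSet (S : Set α) → ∑ i ∈ S, y i = g S - g ∅) :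
    y = greedyVector g := by
  funext i
  have hIci := hy (Ici i) (by simpa using isUpperSet_Ici i)
  have hIoi := hy (Ioi i) (by simpa using isUpperSet_Ioi i)
  rw [← add_sum_Ioi_eq_sum_Ici] at hIci
  rw [greedyVector]
  linarith

end Greedy

section Bisubmodular

variable {α : Type*}

def IsBisubmodular [DecidableEq α] (f : Finset α → Finset α → ℝ) : Prop :=
  ∀ X₁ Y₁ X₂ Y₂ : Finset α, Disjoint X₁ Y₁ → Disjoint X₂ Y₂ →
    f ((X₁ ∪ X₂) \ (Y₁ ∪ Y₂)) ((Y₁ ∪ Y₂) \ (X₁ ∪ X₂)) + f (X₁ ∩ X₂) (Y₁ ∩ Y₂)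
      ≤ f X₁ Y₁ + f X₂ Y₂

def bisubmodularPolyhedron (f : Finset α → Finset α → ℝ) : Set (α → ℝ) :=
  {x | ∀ X Y : Finset α, Disjoint X Y → ∑ i ∈ X, x i - ∑ i ∈ Y, x i ≤ f X Y}

variable {f : Finset α → Finset α → ℝ}

theorem sum_le_of_mem_bisubmodularPolyhedron {x : α → ℝ} (hx : x ∈ bisubmodularPolyhedron f)
    (X : Finset α) : ∑ i ∈ X, x i ≤ f X ∅ := by
  simpa using hx X ∅ (disjoint_empty_right X)

variable [DecidableEq α]

theorem IsBisubmodular.submodular_left (hf : IsBisubmodular f) (X Y : Finset α) :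
    f (X ∪ Y) ∅ + f (X ∩ Y) ∅ ≤ f X ∅ + f Y ∅ := by
  simpa using hf X ∅ Y ∅ (disjoint_empty_right _) (disjoint_empty_right _)

theorem IsBisubmodular.add_compl_le [Fintype α] (hf : IsBisubmodular f) {X Y : Finset α}
    (hXY : Disjoint X Y) : f X ∅ + f Yᶜ ∅ ≤ f X Y + f univ ∅ := by
  have h := hf X Y univ ∅ hXY (disjoint_empty_right _)
  rwa [union_eq_right.2 (subset_univ X), union_empty, ← compl_eq_univ_sdiff,
    sdiff_eq_empty_iff_subset.2 (subset_univ Y), inter_univ, inter_empty,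
    add_comm (f Yᶜ ∅)] at h

theorem IsBisubmodular.mem_bisubmodularPolyhedron [Fintype α] (hf : IsBisubmodular f)
    {x : α → ℝ} (hle : ∀ X, ∑ i ∈ X, x i ≤ f X ∅) (huniv : ∑ i, x i = f univ ∅) :
    x ∈ bisubmodularPolyhedron f := by
  intro X Y hXY
  have hsplit := sum_compl_add_sum Y x
  have := hf.add_compl_le hXY
  linarith [hle X, hle Yᶜ]

end Bisubmodular

section GreedyVertex

variable {α : Type*} [LinearOrder α] [LocallyFiniteOrderTop α]
  {f : Finset α → Finset α → ℝ}

theorem sum_greedyVector_fst_of_isUpperSet (hf0 : f ∅ ∅ = 0) {S : Finset α}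
    (hS : IsUpperSet (S : Set α)) : ∑ i ∈ S, greedyVector (f · ∅) i = f S ∅ := by
  rw [sum_greedyVector_of_isUpperSet _ hS, hf0, sub_zero]

theorem IsBisubmodular.greedyVector_mem [Fintype α] (hf : IsBisubmodular f) (hf0 : f ∅ ∅ = 0) :
    greedyVector (f · ∅) ∈ bisubmodularPolyhedron f :=
  hf.mem_bisubmodularPolyhedron
    (fun X => by simpa [hf0] using sum_greedyVector_le (f · ∅) hf.submodular_left X)
    (sum_greedyVector_fst_of_isUpperSet hf0 (by simpa using isUpperSet_univ))

theorem IsBisubmodular.greedyVector_mem_extremePoints [Fintype α] (hf : IsBisubmodular f)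
    (hf0 : f ∅ ∅ = 0) :
    greedyVector (f · ∅) ∈ (bisubmodularPolyhedron f).extremePoints ℝ := by
  let φ (S : {S : Finset α // IsUpperSet (S : Set α)}) : (α → ℝ) →ₗ[ℝ] ℝ :=
    ∑ i ∈ S.1, LinearMap.proj i
  have hφ (S) (y : α → ℝ) : φ S y = ∑ i ∈ S.1, y i := by simp [φ]
  refine mem_extremePoints_of_tight φ (fun S => f S ∅) (fun y hy S => ?_)
    (hf.greedyVector_mem hf0) (fun S => ?_) (fun y hy htight => ?_)
  · rw [hφ]
    exact sum_le_of_mem_bisubmodularPolyhedron hy S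
  · rw [hφ]
    exact sum_greedyVector_fst_of_isUpperSet hf0 S.2
  · refine eq_greedyVector_of_sum_eq _ fun S hS => ?_
    rw [← hφ ⟨S, hS⟩, htight, hf0, sub_zero]

end GreedyVertex

/-- The greedy vector `x*` (with `x*(i) = f({n,…,i},∅) − f({n,…,i+1},∅)`) belongs to
`P₊(f)`, is tight on the sets `{n,…,i}`, and is an extreme point of `P₊(f)`. -/
theorem greedy_vertex {n : ℕ} (f : Finset (Fin n) → Finset (Fin n) → ℝ)
    (hbi : ∀ X₁ Y₁ X₂ Y₂ : Finset (Fin n), Disjoint X₁ Y₁ → Disjoint X₂ Y₂ →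
      f ((X₁ ∪ X₂) \ (Y₁ ∪ Y₂)) ((Y₁ ∪ Y₂) \ (X₁ ∪ X₂)) + f (X₁ ∩ X₂) (Y₁ ∩ Y₂)
        ≤ f X₁ Y₁ + f X₂ Y₂)
    (hf0 : f ∅ ∅ = 0) :
    letI xstar : Fin n → ℝ := fun i =>
      f (Finset.univ.filter fun j => i ≤ j) ∅ -
        f (Finset.univ.filter fun j => i < j) ∅
    (∀ X Y : Finset (Fin n), Disjoint X Y →
        ∑ i ∈ X, xstar i - ∑ i ∈ Y, xstar i ≤ f X Y) ∧
    (∀ i : Fin n, ∑ j ∈ Finset.univ.filter (fun j => i ≤ j), xstar j =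
        f (Finset.univ.filter fun j => i ≤ j) ∅) ∧
    xstar ∈ Set.extremePoints ℝ {x : Fin n → ℝ | ∀ X Y : Finset (Fin n),
      Disjoint X Y → ∑ i ∈ X, x i - ∑ i ∈ Y, x i ≤ f X Y} := by
  simp only [filter_le_eq_Ici, filter_lt_eq_Ioi]
  have hf : IsBisubmodular f := hbi
  exact ⟨hf.greedyVector_mem hf0,
    fun i => sum_greedyVector_fst_of_isUpperSet hf0 (by simpa using isUpperSet_Ici i),
    hf.greedyVector_mem_extremePoints hf0⟩
end

section
/- All maximal elements (with respect to the order ⊑) of a {⊔,⊓}-closed family F ⊆ 3^N have the same support: if (X₁,Y₁) and (X₂,Y₂) are both ⊑-maximal in F, then X₁∪Y₁ = X₂∪Y₂. -/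
open Finset

lemma support_subset_aux {n : ℕ}
    (F : Set (Finset (Fin n) × Finset (Fin n)))
    (hdisj : ∀ p ∈ F, Disjoint p.1 p.2)
    (hcup : ∀ p ∈ F, ∀ q ∈ F,
      ((p.1 ∪ q.1) \ (p.2 ∪ q.2), (p.2 ∪ q.2) \ (p.1 ∪ q.1)) ∈ F)
    (X₁ Y₁ X₂ Y₂ : Finset (Fin n))
    (h₁ : (X₁, Y₁) ∈ F)
    (h₂ : (X₂, Y₂) ∈ F)
    (hmax₁ : ∀ q ∈ F, X₁ ⊆ q.1 → Y₁ ⊆ q.2 → q = (X₁, Y₁)) :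
    X₂ ∪ Y₂ ⊆ X₁ ∪ Y₁ := by
  have hd1 : ∀ x, x ∈ X₁ → x ∉ Y₁ := fun x hx hy =>
    (Finset.disjoint_left.mp (hdisj _ h₁)) hx hy
  have hd2 : ∀ x, x ∈ X₂ → x ∉ Y₂ := fun x hx hy =>
    (Finset.disjoint_left.mp (hdisj _ h₂)) hx hy
  set A := (X₁ ∪ X₂) \ (Y₁ ∪ Y₂) with hA
  set B := (Y₁ ∪ Y₂) \ (X₁ ∪ X₂) with hB
  have hs : (A, B) ∈ F := hcup _ h₁ _ h₂
  have ht := hcup _ h₁ _ hs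
  simp only at ht
  have heq := hmax₁ _ ht ?_ ?_
  · -- from heq, A ⊆ X₁ and B ⊆ Y₁
    have hAX : A ⊆ X₁ := by
      intro x hx
      have hx' : x ∈ (X₁ ∪ A) \ (Y₁ ∪ B) := by
        simp only [hA, hB, mem_sdiff, mem_union] at hx ⊢
        tauto
      have := congrArg Prod.fst heq
      simp only at this
      rw [this] at hx'
      exact hx'
    have hBY : B ⊆ Y₁ := by
      intro x hx
      have hx' : x ∈ (Y₁ ∪ B) \ (X₁ ∪ A) := by
        simp only [hA, hB, mem_sdiff, mem_union] at hx ⊢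
        tauto
      have := congrArg Prod.snd heq
      simp only at this
      rw [this] at hx'
      exact hx'
    intro x hx
    simp only [mem_union] at hx ⊢
    by_contra hcon
    push_neg at hcon
    obtain ⟨hnx, hny⟩ := hcon
    rcases hx with hx | hx
    · have : x ∈ A := by
        simp only [hA, mem_sdiff, mem_union]
        exact ⟨Or.inr hx, by rintro (h | h); exact hny h; exact hd2 x hx h⟩
      exact hnx (hAX this)
    · have : x ∈ B := by
        simp only [hB, mem_sdiff, mem_union]
        refine ⟨Or.inr hx, ?_⟩
        rintro (h | h)
        · exact hnx h
        · exact hd2 x h hx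
      exact hny (hBY this)
  · intro x hx
    simp only [hA, hB, mem_sdiff, mem_union]
    refine ⟨Or.inl hx, ?_⟩
    rintro (h | ⟨h, h'⟩)
    · exact hd1 x hx h
    · exact h' (Or.inl hx)
  · intro x hx
    simp only [hA, hB, mem_sdiff, mem_union]
    refine ⟨Or.inl hx, ?_⟩
    rintro (h | ⟨h, h'⟩)
    · exact hd1 x h hx
    · exact h' (Or.inl hx)

/-- All `⊑`-maximal members of a `{⊔,⊓}`-closed family of signed subsets have the
same support. -/
theorem maximal_same_support {n : ℕ}
    (F : Set (Finset (Fin n) × Finset (Fin n)))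
    (hdisj : ∀ p ∈ F, Disjoint p.1 p.2)
    (hne : F.Nonempty)
    (hcup : ∀ p ∈ F, ∀ q ∈ F,
      ((p.1 ∪ q.1) \ (p.2 ∪ q.2), (p.2 ∪ q.2) \ (p.1 ∪ q.1)) ∈ F)
    (hcap : ∀ p ∈ F, ∀ q ∈ F, (p.1 ∩ q.1, p.2 ∩ q.2) ∈ F)
    (X₁ Y₁ X₂ Y₂ : Finset (Fin n))
    (h₁ : (X₁, Y₁) ∈ F)
    (h₂ : (X₂, Y₂) ∈ F)
    (hmax₁ : ∀ q ∈ F, X₁ ⊆ q.1 → Y₁ ⊆ q.2 → q = (X₁, Y₁))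
    (hmax₂ : ∀ q ∈ F, X₂ ⊆ q.1 → Y₂ ⊆ q.2 → q = (X₂, Y₂)) :
    X₁ ∪ Y₁ = X₂ ∪ Y₂ := by
  exact Subset.antisymm
    (support_subset_aux F hdisj hcup X₂ Y₂ X₁ Y₁ h₂ h₁ hmax₂)
    (support_subset_aux F hdisj hcup X₁ Y₁ X₂ Y₂ h₁ h₂ hmax₁)
end
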